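/- arXiv:2603.04678 — 3 statements merged into one kernel-verified Lean document; each statement's English description precedes it below -/
import Mathlib

section
/- Deterministic invertible translators: if τ₁² ♯ τ₂¹ = id and τ₂¹ ♯ τ₁² = id for Markov kernels τ₁² : L₁ → Δ(L₂) and τ₂¹ : L₂ → Δ(L₁) on countable sets L₁, L₂, then there exists a bijection t : L₁ → L₂ such that τ₁²(y | x) = indicator(y = t(x)) and τ₂¹(x | y) = indicator(x = t⁻¹(y)). -/
/-!
Write the two identities as `τ₂¹ ♯ τ₁² = id` and `τ₁² ♯ τ₂¹ = id`. Evaluating the first on the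
diagonal gives `∑_y τ₂¹(x | y) τ₁²(y | x) = 1 = ∑_y τ₁²(y | x)`, and all weights `τ₂¹(x | y)` are
at most `1`; hence `τ₁²(y | x) ≠ 0` forces `τ₂¹(x | y) = 1`, and symmetrically `τ₂¹(x | y) ≠ 0`
forces `τ₁²(y | x) = 1`. So every nonzero entry of either kernel equals `1`: both kernels are
deterministic, `τ₁² = δ ∘ t` and `τ₂¹ = δ ∘ s`, and `τ₁²(t x | x) = 1` gives `τ₂¹(x | t x) = 1`,
i.e. `s (t x) = x`.
-/

open scoped NNReal

namespace NNReal

variable {α : Type*} {f g : α → ℝ≥0}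

lemma summable_of_tsum_eq_one (hf : ∑' a, f a = 1) : Summable f := by
  by_contra hs
  simp [tsum_eq_zero_of_not_summable hs] at hf

lemma le_one_of_tsum_eq_one (hf : ∑' a, f a = 1) (a : α) : f a ≤ 1 :=
  hf ▸ (summable_of_tsum_eq_one hf).le_tsum' a

lemma exists_ne_zero_of_tsum_eq_one (hf : ∑' a, f a = 1) : ∃ a, f a ≠ 0 := by
  by_contra! h
  simp [h] at hf

lemma apply_eq_one_of_tsum_mul_eq_one (hf : ∑' a, f a = 1) (hg : ∀ a, g a ≤ 1)
    (hgf : ∑' a, g a * f a = 1) {a : α} (ha : f a ≠ 0) : g a = 1 := by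
  have hf_summable := summable_of_tsum_eq_one hf
  have hgf_summable : Summable (fun b => g b * f b) :=
    NNReal.summable_of_le (fun b => mul_le_of_le_one_left zero_le (hg b)) hf_summable
  have hdefect_summable : Summable (fun b => (1 - g b) * f b) :=
    NNReal.summable_of_le (fun b => mul_le_of_le_one_left zero_le tsub_le_self) hf_summable
  have hdefect : ∑' b, (1 - g b) * f b = 0 := by
    have hsplit : ∀ b, g b * f b + (1 - g b) * f b = f b := fun b => by
      rw [← add_mul, add_tsub_cancel_of_le (hg b), one_mul]
    have htotal := hgf_summable.tsum_add hdefect_summable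
    simp only [hsplit, hf, hgf] at htotal
    exact left_eq_add.mp htotal
  have : (1 - g a) * f a = 0 := hdefect_summable.tsum_eq_zero_iff.mp hdefect a
  exact le_antisymm (hg a) (tsub_eq_zero_iff_le.mp ((mul_eq_zero.mp this).resolve_right ha))

lemma eq_ite_of_tsum_eq_one [DecidableEq α] (hf : ∑' a, f a = 1) {a : α} (ha : f a = 1) (c : α) :
    f c = if c = a then 1 else 0 := by
  split_ifs with hc
  · rw [hc, ha]
  · have hpair : f a + f c ≤ 1 := by
      have := (summable_of_tsum_eq_one hf).sum_le_tsum {a, c} (fun _ _ => zero_le)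
      rwa [Finset.sum_pair (Ne.symm hc), hf] at this
    rw [ha] at hpair
    exact le_antisymm (by simpa using hpair) zero_le

end NNReal

namespace MarkovKernel

open NNReal

variable {A B : Type*} [DecidableEq A] (κ : A → B → ℝ≥0) (μ : B → A → ℝ≥0)

-- `κ x y` stands for `κ(y | x)`, so `hid` says `μ ♯ κ = id`.
lemma apply_eq_one_of_comp_eq_id (hκ : ∀ a, ∑' b, κ a b = 1) (hμ : ∀ b, ∑' a, μ b a = 1)
    (hid : ∀ a c, ∑' b, μ b c * κ a b = if c = a then 1 else 0) {x : A} {y : B}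
    (hxy : κ x y ≠ 0) : μ y x = 1 :=
  apply_eq_one_of_tsum_mul_eq_one (hκ x) (fun b => le_one_of_tsum_eq_one (hμ b) x)
    (by simpa using hid x x) hxy

lemma exists_eq_ite_of_comp_eq_id [DecidableEq B]
    (hκ : ∀ a, ∑' b, κ a b = 1) (hμ : ∀ b, ∑' a, μ b a = 1)
    (hid : ∀ a c, ∑' b, μ b c * κ a b = if c = a then 1 else 0)
    (hid' : ∀ a c, ∑' b, κ b c * μ a b = if c = a then 1 else 0) :
    ∃ t : A → B, ∀ x y, κ x y = if y = t x then 1 else 0 := by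
  choose t ht using fun x => exists_ne_zero_of_tsum_eq_one (hκ x)
  refine ⟨t, fun x => eq_ite_of_tsum_eq_one (hκ x) ?_⟩
  have hμ_one : μ (t x) x = 1 := apply_eq_one_of_comp_eq_id κ μ hκ hμ hid (ht x)
  exact apply_eq_one_of_comp_eq_id μ κ hμ hκ hid' (hμ_one ▸ one_ne_zero)

end MarkovKernel

open MarkovKernel in
theorem stmt_11_general {L₁ L₂ : Type*}
    [DecidableEq L₁] [DecidableEq L₂]
    (τ12 : L₁ → L₂ → ℝ≥0) (τ21 : L₂ → L₁ → ℝ≥0)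
    (h12 : ∀ x : L₁, ∑' y, τ12 x y = 1) (h21 : ∀ y : L₂, ∑' x, τ21 y x = 1)
    (hid₂ : ∀ (a c : L₂), ∑' b : L₁, τ12 b c * τ21 a b = if c = a then 1 else 0)
    (hid₁ : ∀ (a c : L₁), ∑' b : L₂, τ21 b c * τ12 a b = if c = a then 1 else 0) :
    ∃ t : L₁ ≃ L₂,
      (∀ (x : L₁) (y : L₂), τ12 x y = if y = t x then 1 else 0) ∧
      (∀ (y : L₂) (x : L₁), τ21 y x = if x = t.symm y then 1 else 0) := by
  obtain ⟨t, ht⟩ := exists_eq_ite_of_comp_eq_id τ12 τ21 h12 h21 hid₁ hid₂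
  obtain ⟨s, hs⟩ := exists_eq_ite_of_comp_eq_id τ21 τ12 h21 h12 hid₂ hid₁
  have hst : Function.LeftInverse s t := fun x => by
    have := apply_eq_one_of_comp_eq_id τ12 τ21 h12 h21 hid₁ (x := x) (y := t x) (by simp [ht])
    simpa [hs, eq_comm] using this
  have hts : Function.RightInverse s t := fun y => by
    have := apply_eq_one_of_comp_eq_id τ21 τ12 h21 h12 hid₂ (x := y) (y := s y) (by simp [hs])
    simpa [ht, eq_comm] using this
  exact ⟨⟨t, s, hst, hts⟩, ht, hs⟩

theorem stmt_11 {L₁ L₂ : Type*} [Countable L₁] [Countable L₂]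
    [DecidableEq L₁] [DecidableEq L₂]
    (τ12 : L₁ → L₂ → ℝ≥0) (τ21 : L₂ → L₁ → ℝ≥0)
    (h12 : ∀ x : L₁, ∑' y, τ12 x y = 1) (h21 : ∀ y : L₂, ∑' x, τ21 y x = 1)
    (hid₂ : ∀ (a c : L₂), ∑' b : L₁, τ12 b c * τ21 a b = if c = a then 1 else 0)
    (hid₁ : ∀ (a c : L₁), ∑' b : L₂, τ21 b c * τ12 a b = if c = a then 1 else 0) :
    ∃ t : L₁ ≃ L₂,
      (∀ (x : L₁) (y : L₂), τ12 x y = if y = t x then 1 else 0) ∧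
      (∀ (y : L₂) (x : L₁), τ21 y x = if x = t.symm y then 1 else 0) :=
  stmt_11_general τ12 τ21 h12 h21 hid₂ hid₁
end

section
/- Crosslingual consistency of the PCO optimum (bilingual case): Let t : L₁ → L₂ be a bijection between finite sets and ρ a strictly positive Markov kernel over L₁ ∪ L₂ (viewed as separate kernels on each language via the disjoint union). Let β₁, β₂ > 0 with β₁β₂ = 1. Define π*(y₁ | x₁) ∝ ρ(t(y₁) | t(x₁))^{β₁} ρ(y₁ | x₁) for x₁, y₁ ∈ L₁, and π*(y₂ | x₂) ∝ ρ(t⁻¹(y₂) | t⁻¹(x₂))^{β₂} ρ(y₂ | x₂) for x₂, y₂ ∈ L₂. Then for every x₁ ∈ L₁, the distribution π*(· | x₁) equals the β₁-annealing of the distribution y₁ ↦ π*(t(y₁) | t(x₁)), i.e., π*(y₁ | x₁) = π*(t(y₁) | t(x₁))^{β₁} / Σ_{y'} π*(t(y') | t(x₁))^{β₁}. -/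
theorem stmt_13 {L₁ L₂ : Type*} [Fintype L₁] [Fintype L₂]
    [Nonempty L₁] [Nonempty L₂]
    (t : L₁ ≃ L₂)
    (ρ₁ : L₁ → L₁ → ℝ) (ρ₂ : L₂ → L₂ → ℝ)
    (hρ₁pos : ∀ x y, 0 < ρ₁ x y) (hρ₂pos : ∀ x y, 0 < ρ₂ x y)
    (hρ₁sum : ∀ x, ∑ y, ρ₁ x y = 1) (hρ₂sum : ∀ x, ∑ y, ρ₂ x y = 1)
    (β₁ β₂ : ℝ) (hβ₁ : 0 < β₁) (hβ₂ : 0 < β₂) (hββ : β₁ * β₂ = 1)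
    (πstar₁ : L₁ → L₁ → ℝ) (πstar₂ : L₂ → L₂ → ℝ)
    (hπ₁ : ∀ x y, πstar₁ x y =
      ρ₂ (t x) (t y) ^ β₁ * ρ₁ x y / ∑ y', ρ₂ (t x) (t y') ^ β₁ * ρ₁ x y')
    (hπ₂ : ∀ x y, πstar₂ x y =
      ρ₁ (t.symm x) (t.symm y) ^ β₂ * ρ₂ x y /
        ∑ y', ρ₁ (t.symm x) (t.symm y') ^ β₂ * ρ₂ x y') :
    ∀ (x₁ y₁ : L₁),
      πstar₁ x₁ y₁ =
        πstar₂ (t x₁) (t y₁) ^ β₁ / ∑ y', πstar₂ (t x₁) (t y') ^ β₁ := by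
  intro x₁ y₁
  set f : L₁ → ℝ := fun y => ρ₂ (t x₁) (t y) ^ β₁ * ρ₁ x₁ y with hf
  set D : ℝ := ∑ y', ρ₁ (t.symm (t x₁)) (t.symm y') ^ β₂ * ρ₂ (t x₁) y' with hD
  have hfpos : ∀ y, 0 < f y := fun y =>
    mul_pos (Real.rpow_pos_of_pos (hρ₂pos _ _) _) (hρ₁pos _ _)
  have hSpos : 0 < ∑ y, f y := Finset.sum_pos (fun y _ => hfpos y) Finset.univ_nonempty
  have hDpos : 0 < D :=
    Finset.sum_pos (fun y _ => mul_pos (Real.rpow_pos_of_pos (hρ₁pos _ _) _) (hρ₂pos _ _))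
      Finset.univ_nonempty
  have key : ∀ y : L₁, πstar₂ (t x₁) (t y) ^ β₁ = f y / D ^ β₁ := by
    intro y
    rw [hπ₂]
    rw [Real.div_rpow (le_of_lt (mul_pos (Real.rpow_pos_of_pos (hρ₁pos _ _) _) (hρ₂pos _ _)))
      hDpos.le]
    congr 1
    rw [Real.mul_rpow (Real.rpow_pos_of_pos (hρ₁pos _ _) _).le (hρ₂pos _ _).le,
      ← Real.rpow_mul (hρ₁pos _ _).le]
    simp only [Equiv.symm_apply_apply, hf]
    rw [mul_comm β₂ β₁, hββ, Real.rpow_one, mul_comm]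
  rw [hπ₁, key]
  have hsum : ∑ y', πstar₂ (t x₁) (t y') ^ β₁ = (∑ y', f y') / D ^ β₁ := by
    rw [Finset.sum_div]; exact Finset.sum_congr rfl fun y _ => key y
  rw [hsum]
  have hDβ : D ^ β₁ ≠ 0 := (Real.rpow_pos_of_pos hDpos _).ne'
  show f y₁ / ∑ y', f y' = f y₁ / D ^ β₁ / ((∑ y', f y') / D ^ β₁)
  field_simp
end

section
/- Pairwise consistency under a rank-one strength matrix: let S be a finite set, ρ₁, …, ρ_N strictly positive probability distributions on S (the reference distribution expressed in each of N ≥ 2 languages via a common relabeling), and u, v ∈ ℝ>0^N with u_m v_m = 1 for all m. Define π*_m(y) ∝ ρ_m(y) · ∏_{n ≠ m} ρ_n(y)^{u_m v_n}. Then for all m ≠ n, the identity (π*_m(y))^{u_n} · C_{mn} = (π*_n(y))^{u_m} holds for all y ∈ S, for some constant C_{mn} > 0 independent of y; equivalently, π*_m equals the (u_m/u_n)-annealing of π*_n. -/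
theorem stmt_17 {S : Type*} [Fintype S] [Nonempty S]
    (N : ℕ) (hN : 2 ≤ N)
    (ρ : Fin N → S → ℝ) (hρpos : ∀ m y, 0 < ρ m y)
    (hρsum : ∀ m, ∑ y, ρ m y = 1)
    (u v : Fin N → ℝ) (hu : ∀ m, 0 < u m) (hv : ∀ m, 0 < v m)
    (huv : ∀ m, u m * v m = 1)
    (πstar : Fin N → S → ℝ)
    (hπstar : ∀ m y, πstar m y =
      (ρ m y * ∏ n ∈ Finset.univ.erase m, ρ n y ^ (u m * v n)) /
        ∑ y', ρ m y' * ∏ n ∈ Finset.univ.erase m, ρ n y' ^ (u m * v n)) :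
    ∀ m n : Fin N, m ≠ n →
      ∃ C : ℝ, 0 < C ∧ ∀ y, πstar m y ^ u n * C = πstar n y ^ u m := by
  set f : Fin N → S → ℝ := fun m y =>
    ρ m y * ∏ n ∈ Finset.univ.erase m, ρ n y ^ (u m * v n) with hfdef
  have hf : ∀ m y, f m y = ∏ ℓ, ρ ℓ y ^ (u m * v ℓ) := by
    intro m y
    rw [hfdef]
    simp only
    rw [← Finset.mul_prod_erase Finset.univ (fun ℓ => ρ ℓ y ^ (u m * v ℓ))
      (Finset.mem_univ m), huv m, Real.rpow_one]
  have hfpos : ∀ m y, 0 < f m y := by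
    intro m y
    rw [hf]
    exact Finset.prod_pos fun ℓ _ => Real.rpow_pos_of_pos (hρpos ℓ y) _
  have key : ∀ m n y, f m y ^ u n = f n y ^ u m := by
    intro m n y
    rw [hf, hf, ← Real.finset_prod_rpow _ _ (fun ℓ _ => (Real.rpow_pos_of_pos (hρpos ℓ y) _).le),
      ← Real.finset_prod_rpow _ _ (fun ℓ _ => (Real.rpow_pos_of_pos (hρpos ℓ y) _).le)]
    apply Finset.prod_congr rfl
    intro ℓ _
    rw [← Real.rpow_mul (hρpos ℓ y).le, ← Real.rpow_mul (hρpos ℓ y).le]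
    ring_nf
  intro m n hmn
  set Z : Fin N → ℝ := fun m => ∑ y', f m y' with hZdef
  have hZpos : ∀ m, 0 < Z m := fun m =>
    Finset.sum_pos (fun y _ => hfpos m y) Finset.univ_nonempty
  refine ⟨Z m ^ u n / Z n ^ u m, div_pos (Real.rpow_pos_of_pos (hZpos m) _)
    (Real.rpow_pos_of_pos (hZpos n) _), fun y => ?_⟩
  have hπ : ∀ k y, πstar k y = f k y / Z k := fun k y => hπstar k y
  rw [hπ, hπ, Real.div_rpow (hfpos m y).le (hZpos m).le,
    Real.div_rpow (hfpos n y).le (hZpos n).le, key m n y]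
  have h1 : Z m ^ u n ≠ 0 := (Real.rpow_pos_of_pos (hZpos m) _).ne'
  have h2 : Z n ^ u m ≠ 0 := (Real.rpow_pos_of_pos (hZpos n) _).ne'
  field_simp
end
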